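/- Soundness of ≃ with respect to λA-frames: let (W, ▷) be a λA-frame and fix a syntactical λ-algebra (V, ·, ⟦ ⟧). If A ≃ B, then I(A)^η_p = I(B)^η_p for every hereditary type environment η and every world p ∈ W. -/

import Mathlib

namespace LambdaA

/-! ### Type expressions (de Bruijn representation for `μ`-binders) -/

inductive Ty : Type
  | var : ℕ → Ty
  | arrow : Ty → Ty → Ty
  | box : Ty → Ty
  | mu : Ty → Ty
  deriving DecidableEq

namespace Ty

def rename : (ℕ → ℕ) → Ty → Ty
  | f, var n => var (f n)
  | f, arrow A B => arrow (rename f A) (rename f B)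
  | f, box A => box (rename f A)
  | f, mu A => mu (rename (fun n => match n with | 0 => 0 | Nat.succ m => f m + 1) A)

def shiftUp : Ty → Ty := rename Nat.succ

def subst : (ℕ → Ty) → Ty → Ty
  | σ, var n => σ n
  | σ, arrow A B => arrow (subst σ A) (subst σ B)
  | σ, box A => box (subst σ A)
  | σ, mu A => mu (subst (fun n => match n with | 0 => var 0 | Nat.succ m => shiftUp (σ m)) A)

end Ty

/-- `openT A B`: instantiate the outermost bound variable (index `0`) of the body `A` by `B`. -/
def openT (A B : Ty) : Ty :=
  Ty.subst (fun n => match n with | 0 => B | Nat.succ m => Ty.var m) A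

/-- `substFree A X B` is the capture-avoiding substitution `A[B/X]` for the free variable `X`. -/
def substFree (A : Ty) (X : ℕ) (B : Ty) : Ty :=
  Ty.subst (fun n => if n = X then B else Ty.var n) A

/-- The unfolding `μX.A ↦ A[μX.A/X]` of a recursive type. -/
def unfoldMu (A : Ty) : Ty := openT A (Ty.mu A)

/-- Free occurrence of a type variable in a type expression. -/
def freeInTy : ℕ → Ty → Prop
  | X, .var n => n = X
  | X, .arrow A B => freeInTy X A ∨ freeInTy X B
  | X, .box A => freeInTy X A
  | X, .mu A => freeInTy (X + 1) A

/-- Auxiliary ⊤-variant test.  `tvAux A d t` scans the tail of `A`, where `d` is the number of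
`μ`-binders passed so far and `t` is the number of (outermost) such binders inside which a `•`
has already been encountered.  A variable qualifies iff it is bound by one of the `μ`-binders
and at least one `•` occurs inside that binder. -/
def tvAux : Ty → ℕ → ℕ → Bool
  | .var j, d, t => decide (d - t ≤ j ∧ j < d)
  | .box A, d, _ => tvAux A d d
  | .mu A, d, t => tvAux A (d + 1) t
  | .arrow _ B, d, t => tvAux B d t

/-- `A` is a ⊤-variant. -/
def IsTV (A : Ty) : Prop := tvAux A 0 0 = true

/-- `Proper A X` : the type expression `A` is proper in the (free) variable `X`. -/
def Proper : Ty → ℕ → Prop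
  | .var n, X => n ≠ X
  | .box _, _ => True
  | .arrow A B, X => (Proper A X ∧ Proper B X) ∨ IsTV B
  | .mu A, X => Proper A (X + 1) ∨ IsTV (.mu A)

/-- Well-formed type expressions: every recursive type `μX.A` has `A` proper in `X`. -/
def WF : Ty → Prop
  | .var _ => True
  | .arrow A B => WF A ∧ WF B
  | .box A => WF A
  | .mu A => WF A ∧ Proper A 0

/-- `⊤ = μX.•X`. -/
def tyTop : Ty := .mu (.box (.var 0))

/-- `•ⁿ A`. -/
def boxN (n : ℕ) (A : Ty) : Ty := Ty.box^[n] A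

/-- The equivalences `≅` (`s = false`) and `≃` (`s = true`) on type expressions. -/
inductive TyEq : Bool → Ty → Ty → Prop
  | refl (s : Bool) (A : Ty) : TyEq s A A
  | symm {s : Bool} {A B : Ty} : TyEq s A B → TyEq s B A
  | trans {s : Bool} {A B C : Ty} : TyEq s A B → TyEq s B C → TyEq s A C
  | boxCongr {s : Bool} {A B : Ty} : TyEq s A B → TyEq s (.box A) (.box B)
  | arrowCongr {s : Bool} {A B C D : Ty} :
      TyEq s A C → TyEq s B D → TyEq s (.arrow A B) (.arrow C D)
  | arrowTop (s : Bool) (A : Ty) : TyEq s (.arrow A tyTop) tyTop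
  | fix (s : Bool) (A : Ty) : TyEq s (.mu A) (unfoldMu A)
  | uniq {s : Bool} {A C : Ty} : TyEq s A (openT C A) → Proper C 0 → TyEq s A (.mu C)
  | kl (A B : Ty) : TyEq true (.box (.arrow A B)) (.arrow (.box A) (.box B))

/-! ### Subtyping -/

/-- Subtyping assumptions: finite sets of pairs of type variables. -/
abbrev Assum := Finset (ℕ × ℕ)

/-- Well-formedness of a subtyping assumption: every type variable occurs at most once. -/
def AssumOK (γ : Assum) : Prop :=
  (∀ p ∈ γ, (p : ℕ × ℕ).1 ≠ p.2) ∧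
    ∀ p ∈ γ, ∀ q ∈ γ, p ≠ q →
      (p : ℕ × ℕ).1 ≠ (q : ℕ × ℕ).1 ∧ p.1 ≠ q.2 ∧ p.2 ≠ q.1 ∧ p.2 ≠ q.2

/-- `X` occurs in the subtyping assumption `γ`. -/
def AssumVar (γ : Assum) (X : ℕ) : Prop :=
  ∃ p ∈ γ, (p : ℕ × ℕ).1 = X ∨ (p : ℕ × ℕ).2 = X

/-- Derivability of subtyping judgments `γ ⊢ A ⪯ B`. -/
inductive Sub : Assum → Ty → Ty → Prop
  | assump {γ : Assum} {X Y : ℕ} : AssumOK γ → (X, Y) ∈ γ → Sub γ (.var X) (.var Y)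
  | top {γ : Assum} (A : Ty) : AssumOK γ → Sub γ A tyTop
  | refl {γ : Assum} {A B : Ty} : AssumOK γ → TyEq true A B → Sub γ A B
  | trans {γ₁ γ₂ : Assum} {A B C : Ty} :
      Sub γ₁ A B → Sub γ₂ B C → AssumOK (γ₁ ∪ γ₂) → Sub (γ₁ ∪ γ₂) A C
  | boxMono {γ : Assum} {A B : Ty} : Sub γ A B → Sub γ (.box A) (.box B)
  | arrowMono {γ₁ γ₂ : Assum} {A A' B B' : Ty} :
      Sub γ₁ A' A → Sub γ₂ B B' → AssumOK (γ₁ ∪ γ₂) →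
      Sub (γ₁ ∪ γ₂) (.arrow A B) (.arrow A' B')
  | muMono {γ : Assum} {X Y : ℕ} {A B : Ty} :
      AssumOK (insert (X, Y) γ) →
      Sub (insert (X, Y) γ) (openT A (.var X)) (openT B (.var Y)) →
      ¬ AssumVar γ X → ¬ AssumVar γ Y →
      ¬ freeInTy X (openT B (.var Y)) → ¬ freeInTy Y (openT A (.var X)) →
      Proper (openT A (.var X)) X → Proper (openT B (.var Y)) Y →
      Sub γ (.mu A) (.mu B)
  | approx {γ : Assum} (A : Ty) : AssumOK γ → Sub γ A (.box A)

/-! ### Untyped λ-terms (locally-nameless representation) -/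

inductive Tm : Type
  | bvar : ℕ → Tm
  | fvar : ℕ → Tm
  | lam : Tm → Tm
  | app : Tm → Tm → Tm
  deriving DecidableEq

def openTmAux (N : Tm) : ℕ → Tm → Tm
  | _, .fvar y => .fvar y
  | k, .bvar i => if i = k then N else .bvar i
  | k, .lam M => .lam (openTmAux N (k + 1) M)
  | k, .app M₁ M₂ => .app (openTmAux N k M₁) (openTmAux N k M₂)

/-- Instantiate the outermost bound variable of the body `M` by `N`. -/
def openTm (M N : Tm) : Tm := openTmAux N 0 M

/-- `substTm M x N` is the substitution `M[N/x]` for the free variable `x`. -/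
def substTm : Tm → ℕ → Tm → Tm
  | .bvar i, _, _ => .bvar i
  | .fvar y, x, N => if y = x then N else .fvar y
  | .lam M, x, N => .lam (substTm M x N)
  | .app M₁ M₂, x, N => .app (substTm M₁ x N) (substTm M₂ x N)

/-- Free occurrence of an individual variable in a λ-term. -/
def freeTm : ℕ → Tm → Prop
  | _, .bvar _ => False
  | x, .fvar y => y = x
  | x, .lam M => freeTm x M
  | x, .app M₁ M₂ => freeTm x M₁ ∨ freeTm x M₂

/-- One-step β-reduction. -/
inductive Step : Tm → Tm → Prop
  | beta (M N : Tm) : Step (.app (.lam M) N) (openTm M N)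
  | appL {M M' : Tm} (N : Tm) : Step M M' → Step (.app M N) (.app M' N)
  | appR (M : Tm) {N N' : Tm} : Step N N' → Step (.app M N) (.app M N')
  | lamCongr {M M' : Tm} : Step M M' → Step (.lam M) (.lam M')

/-- `→*β`, the reflexive-transitive closure of β-reduction. -/
def Steps : Tm → Tm → Prop := Relation.ReflTransGen Step

/-- β-convertibility `=β`. -/
inductive BetaEq : Tm → Tm → Prop
  | step {M N : Tm} : Step M N → BetaEq M N
  | refl (M : Tm) : BetaEq M M
  | symm {M N : Tm} : BetaEq M N → BetaEq N M
  | trans {M N K : Tm} : BetaEq M N → BetaEq N K → BetaEq M K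

/-! ### Typing -/

/-- Typing contexts: finite sets of (variable, type) pairs. -/
abbrev Ctx := Finset (ℕ × Ty)

/-- Well-formedness of a typing context (functionality). -/
def CtxOK (Γ : Ctx) : Prop :=
  ∀ p ∈ Γ, ∀ q ∈ Γ, (p : ℕ × Ty).1 = (q : ℕ × Ty).1 → p = q

/-- `•Γ`. -/
def boxCtx (Γ : Ctx) : Ctx := Γ.image fun p => (p.1, Ty.box p.2)

/-- All types in the context are well-formed type expressions. -/
def CtxWF (Γ : Ctx) : Prop := ∀ p ∈ Γ, WF (p : ℕ × Ty).2

/-- The typing system λA. -/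
inductive Typing : Ctx → Tm → Ty → Prop
  | var {Γ : Ctx} {x : ℕ} {A : Ty} : CtxOK Γ → (x, A) ∈ Γ → Typing Γ (.fvar x) A
  | shift {Γ : Ctx} {M : Tm} {A : Ty} : Typing (boxCtx Γ) M (.box A) → Typing Γ M A
  | top {Γ : Ctx} (M : Tm) : CtxOK Γ → Typing Γ M tyTop
  | sub {Γ : Ctx} {M : Tm} {A B : Ty} : Typing Γ M A → Sub ∅ A B → Typing Γ M B
  | lamI {Γ : Ctx} {x : ℕ} {A B : Ty} {M : Tm} :
      ¬ freeTm x M →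
      Typing (insert (x, A) Γ) (openTm M (.fvar x)) B →
      Typing Γ (.lam M) (.arrow A B)
  | appE {Γ₁ Γ₂ : Ctx} {M N : Tm} {A B : Ty} :
      Typing Γ₁ M (.arrow A B) → Typing Γ₂ N A → CtxOK (Γ₁ ∪ Γ₂) →
      Typing (Γ₁ ∪ Γ₂) (.app M N) B

/-! ### Frames, λ-algebras and the semantics of types -/

/-- The accessibility relation is conversely well-founded. -/
def ConverselyWF {W : Type*} (acc : W → W → Prop) : Prop :=
  WellFounded fun q p => acc p q

/-- Local linearity of the accessibility relation. -/
def LocallyLinear {W : Type*} (acc : W → W → Prop) : Prop :=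
  ∀ p q, acc p q → ∃ r, Relation.ReflTransGen acc p r ∧ acc r q ∧
    ∀ s, acc r s → Relation.ReflTransGen acc q s

/-- Hereditary type environments. -/
def Hereditary {W : Type*} {V : Type*} (acc : W → W → Prop) (η : ℕ → W → Set V) : Prop :=
  ∀ X p q, acc p q → η X p ⊆ η X q

/-- Syntactical λ-algebras of the untyped λ-calculus. -/
structure LambdaAlgebra (V : Type*) where
  nonempty : Nonempty V
  ap : V → V → V
  den : Tm → (ℕ → V) → V
  den_fvar : ∀ x ρ, den (.fvar x) ρ = ρ x
  den_app : ∀ M N ρ, den (.app M N) ρ = ap (den M ρ) (den N ρ)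
  den_lam : ∀ M x ρ v, ¬ freeTm x M →
    ap (den (.lam M) ρ) v = den (openTm M (.fvar x)) (Function.update ρ x v)
  den_ext : ∀ M ρ ρ', (∀ x, freeTm x M → ρ x = ρ' x) → den M ρ = den M ρ'
  den_beta : ∀ M N ρ, BetaEq M N → den M ρ = den N ρ

/-- The interpretation `I(A)^η_p` of type expressions over a frame, packaged together with
its defining (recursion) equations. -/
structure Interp (W : Type*) (acc : W → W → Prop) (V : Type*) (ap : V → V → V) where
  I : Ty → (ℕ → W → Set V) → W → Set V
  I_tv : ∀ A η p, WF A → IsTV A → I A η p = Set.univ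
  I_var : ∀ X η p, I (.var X) η p = η X p
  I_box : ∀ A η p, WF A → ¬ IsTV (Ty.box A) →
    I (.box A) η p = {u | ∀ q, acc p q → u ∈ I A η q}
  I_arrow : ∀ A B η p, WF A → WF B → ¬ IsTV (Ty.arrow A B) →
    I (.arrow A B) η p =
      {u | ∀ q, Relation.ReflTransGen acc p q → ∀ v ∈ I A η q, ap u v ∈ I B η q}
  I_mu : ∀ A η p, WF (Ty.mu A) → ¬ IsTV (Ty.mu A) →
    I (.mu A) η p = I (unfoldMu A) η p

/-! ### Tail finiteness and related notions -/

/-- The sets `TF^V`. -/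
inductive TFmem : Set ℕ → Ty → Prop
  | var {V : Set ℕ} {X : ℕ} : X ∉ V → TFmem V (.var X)
  | box {V : Set ℕ} {A : Ty} : TFmem V A → TFmem V (.box A)
  | arrow {V : Set ℕ} (A : Ty) {B : Ty} : TFmem V B → TFmem V (.arrow A B)
  | mu {V : Set ℕ} {A : Ty} : WF (.mu A) → TFmem ({0} ∪ (Nat.succ '' V)) A → TFmem V (.mu A)

/-- Shapes `•^{m₀}(B₁ → •^{m₁}(B₂ → ⋯ → •^{m_{n-1}}(Bₙ → •^{mₙ} X)⋯))`. -/
inductive TFShape : Ty → Prop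
  | var (X : ℕ) : TFShape (.var X)
  | box {A : Ty} : TFShape A → TFShape (.box A)
  | arrow (A : Ty) {B : Ty} : TFShape B → TFShape (.arrow A B)

/-- Tail finite type expressions. -/
def TailFinite (A : Ty) : Prop := ∃ C, TFShape C ∧ WF C ∧ TyEq false A C

-- Effectively occurring type variables, positively (`petv`) and negatively (`netv`).
mutual
  def petv : Ty → Finset ℕ
    | .var X => {X}
    | .box A => if tvAux (.box A) 0 0 then ∅ else petv A
    | .arrow A B => if tvAux (.arrow A B) 0 0 then ∅ else netv A ∪ petv B
    | .mu A =>
        if tvAux (.mu A) 0 0 then ∅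
        else if 0 ∈ netv A then ((petv A ∪ netv A).erase 0).image (· - 1)
        else ((petv A).erase 0).image (· - 1)
  def netv : Ty → Finset ℕ
    | .var _ => ∅
    | .box A => if tvAux (.box A) 0 0 then ∅ else netv A
    | .arrow A B => if tvAux (.arrow A B) 0 0 then ∅ else petv A ∪ netv B
    | .mu A =>
        if tvAux (.mu A) 0 0 then ∅
        else if 0 ∈ netv A then ((netv A ∪ petv A).erase 0).image (· - 1)
        else ((netv A).erase 0).image (· - 1)
end

/-- Positively finite type expressions. -/
def PosFin (A : Ty) : Prop :=
  ∀ (s : Bool) (B C : Ty) (X : ℕ), WF B → WF C →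
    TyEq s A (substFree B X C) → X ∈ petv B → X ∉ netv B → TailFinite C

/-- Negatively finite type expressions. -/
def NegFin (A : Ty) : Prop :=
  ∀ (s : Bool) (B C : Ty) (X : ℕ), WF B → WF C →
    TyEq s A (substFree B X C) → X ∈ netv B → X ∉ petv B → TailFinite C

/-! ### Head normal forms, maximality, normal forms -/

/-- `y N₁ … Nₙ` with every argument satisfying `P`. -/
inductive SpineArgs (P : Tm → Prop) : Tm → Prop
  | fvar (x : ℕ) : SpineArgs P (.fvar x)
  | bvar (i : ℕ) : SpineArgs P (.bvar i)
  | app {M N : Tm} : SpineArgs P M → P N → SpineArgs P (.app M N)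

/-- Head normal forms `λx₁…λxₘ. y N₁ … Nₙ` whose arguments satisfy `P`. -/
inductive HNFP (P : Tm → Prop) : Tm → Prop
  | spine {M : Tm} : SpineArgs P M → HNFP P M
  | lam {M : Tm} : HNFP P M → HNFP P (.lam M)

/-- Head normal forms. -/
def HNF : Tm → Prop := HNFP fun _ => True

/-- Maximality at a given depth. -/
def MaxAt : ℕ → Tm → Prop
  | 0, _ => True
  | n + 1, M => ∃ M', Steps M M' ∧ HNFP (MaxAt n) M'

/-- Maximal λ-terms: the Böhm tree contains no `⊥`. -/
def Maximal (M : Tm) : Prop := ∀ n, MaxAt n M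

/-- β-normal forms. -/
def NormalForm (M : Tm) : Prop := ∀ N, ¬ Step M N

/-- Type expressions without any occurrence of the modal operator `•`. -/
def NoBox : Ty → Prop
  | .var _ => True
  | .arrow A B => NoBox A ∧ NoBox B
  | .box _ => False
  | .mu A => NoBox A

/-! ### The modal logic LAμ and its Kripke semantics -/

/-- The logic LAμ (formulae are type expressions). -/
inductive LAmu : Finset Ty → Ty → Prop
  | assump {Γ : Finset Ty} {A : Ty} : LAmu (insert A Γ) A
  | nec {Γ₁ : Finset Ty} (Γ₂ : Finset Ty) {A : Ty} :
      LAmu Γ₁ A → LAmu (Γ₁.image Ty.box ∪ Γ₂) (.box A)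
  | four {Γ : Finset Ty} {A : Ty} : LAmu Γ (.box A) → LAmu Γ (.box (.box A))
  | impI {Γ : Finset Ty} {A B : Ty} : LAmu (insert A Γ) B → LAmu Γ (.arrow A B)
  | impE {Γ₁ Γ₂ : Finset Ty} {A B : Ty} :
      LAmu Γ₁ (.arrow A B) → LAmu Γ₂ A → LAmu (Γ₁ ∪ Γ₂) B
  | fold {Γ : Finset Ty} {A : Ty} : LAmu Γ (unfoldMu A) → LAmu Γ (.mu A)
  | unfold {Γ : Finset Ty} {A : Ty} : LAmu Γ (.mu A) → LAmu Γ (unfoldMu A)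
  | lrule {Γ : Finset Ty} {A B : Ty} :
      LAmu Γ (.arrow (.box A) (.box B)) → LAmu Γ (.box (.arrow A B))
  | approx {Γ : Finset Ty} {A : Ty} : LAmu Γ A → LAmu Γ (.box A)

/-- The Kripke satisfaction relation over an LA-frame `(W, tri, R)` under a valuation `ξ`,
packaged with its defining (recursion) equations. -/
structure SatFun {W : Type*} (tri R : W → W → Prop) (ξ : ℕ → W → Prop) where
  sat : Ty → W → Prop
  sat_tv : ∀ A p, WF A → IsTV A → sat A p
  sat_var : ∀ X p, sat (.var X) p ↔ ξ X p
  sat_box : ∀ A p, WF A → ¬ IsTV (Ty.box A) →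
    (sat (.box A) p ↔ ∀ q, tri p q → sat A q)
  sat_arrow : ∀ A B p, WF A → WF B → ¬ IsTV (Ty.arrow A B) →
    (sat (.arrow A B) p ↔ ∀ q, R p q → sat A q → sat B q)
  sat_mu : ∀ A p, WF (Ty.mu A) → ¬ IsTV (Ty.mu A) →
    (sat (.mu A) p ↔ sat (unfoldMu A) p)

/-!
The intermediate types of a derivation of `A ≃ B` need not be type expressions, so the argument
runs through `sem`, an interpretation of all pseudo type expressions defined by well-founded
recursion on later worlds and, within a world, on a weight that decreases through `→` and `μ`;
it reads a non-proper `μ` as `∅` and agrees with `Int` on type expressions. Every rule of `≃`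
preserves the tail of a type (hence ⊤-variance), its junk depth (the box depth of its shallowest
non-proper `μ`) and, for junk-free types, `sem` on hereditary environments. For the uniqueness
rule, `A ≃ C[A/X]` with `C` proper in `X` determines the meaning of `A` at a world from its
meanings at strictly later worlds, exactly as for `μX.C`, so the two agree by well-founded
induction. Local linearity enters only through `•(A → B) ≃ •A → •B`.
-/

/-! ### Substitution -/

namespace Ty

def upRen (f : ℕ → ℕ) : ℕ → ℕ := fun n => match n with | 0 => 0 | Nat.succ m => f m + 1

def upSubst (σ : ℕ → Ty) : ℕ → Ty := fun n =>
  match n with | 0 => var 0 | Nat.succ m => shiftUp (σ m)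

@[simp] lemma upRen_zero (f : ℕ → ℕ) : upRen f 0 = 0 := rfl
@[simp] lemma upRen_succ (f : ℕ → ℕ) (n : ℕ) : upRen f (n + 1) = f n + 1 := rfl
@[simp] lemma upSubst_zero (σ : ℕ → Ty) : upSubst σ 0 = var 0 := rfl
@[simp] lemma upSubst_succ (σ : ℕ → Ty) (n : ℕ) : upSubst σ (n + 1) = shiftUp (σ n) := rfl

@[simp] lemma rename_var (f : ℕ → ℕ) (n : ℕ) : rename f (var n) = var (f n) := rfl
@[simp] lemma rename_arrow (f : ℕ → ℕ) (A B : Ty) :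
    rename f (arrow A B) = arrow (rename f A) (rename f B) := rfl
@[simp] lemma rename_box (f : ℕ → ℕ) (A : Ty) : rename f (box A) = box (rename f A) := rfl
@[simp] lemma rename_mu (f : ℕ → ℕ) (A : Ty) :
    rename f (mu A) = mu (rename (upRen f) A) := rfl
@[simp] lemma subst_var (σ : ℕ → Ty) (n : ℕ) : subst σ (var n) = σ n := rfl
@[simp] lemma subst_arrow (σ : ℕ → Ty) (A B : Ty) :
    subst σ (arrow A B) = arrow (subst σ A) (subst σ B) := rfl
@[simp] lemma subst_box (σ : ℕ → Ty) (A : Ty) : subst σ (box A) = box (subst σ A) := rfl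
@[simp] lemma subst_mu (σ : ℕ → Ty) (A : Ty) :
    subst σ (mu A) = mu (subst (upSubst σ) A) := rfl

lemma upRen_injective {f : ℕ → ℕ} (hf : Function.Injective f) :
    Function.Injective (upRen f) := by
  rintro (_ | a) (_ | b) h <;> simp_all [hf.eq_iff]

lemma rename_congr {f g : ℕ → ℕ} (h : ∀ n, f n = g n) (A : Ty) :
    rename f A = rename g A := by
  induction A generalizing f g with
  | var n => simp [h]
  | arrow B C ihB ihC => simp [ihB h, ihC h]
  | box B ih => simp [ih h]
  | mu B ih => simp only [rename_mu, mu.injEq]; exact ih (by rintro (_ | n) <;> simp [h])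

lemma subst_congr {σ τ : ℕ → Ty} (h : ∀ n, σ n = τ n) (A : Ty) :
    subst σ A = subst τ A := by
  induction A generalizing σ τ with
  | var n => simp [h]
  | arrow B C ihB ihC => simp [ihB h, ihC h]
  | box B ih => simp [ih h]
  | mu B ih => simp only [subst_mu, mu.injEq]; exact ih (by rintro (_ | n) <;> simp [h])

lemma rename_rename (f g : ℕ → ℕ) (A : Ty) :
    rename f (rename g A) = rename (fun n => f (g n)) A := by
  induction A generalizing f g with
  | var n => rfl
  | arrow B C ihB ihC => simp [ihB, ihC]
  | box B ih => simp [ih]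
  | mu B ih =>
      simp only [rename_mu, ih]
      exact congrArg mu (rename_congr (by rintro (_ | n) <;> rfl) B)

lemma subst_rename (σ : ℕ → Ty) (f : ℕ → ℕ) (A : Ty) :
    subst σ (rename f A) = subst (fun n => σ (f n)) A := by
  induction A generalizing σ f with
  | var n => rfl
  | arrow B C ihB ihC => simp [ihB, ihC]
  | box B ih => simp [ih]
  | mu B ih =>
      simp only [rename_mu, subst_mu, ih]
      exact congrArg mu (subst_congr (by rintro (_ | n) <;> rfl) B)

lemma rename_subst (f : ℕ → ℕ) (σ : ℕ → Ty) (A : Ty) :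
    rename f (subst σ A) = subst (fun n => rename f (σ n)) A := by
  induction A generalizing σ f with
  | var n => rfl
  | arrow B C ihB ihC => simp [ihB, ihC]
  | box B ih => simp [ih]
  | mu B ih =>
      simp only [rename_mu, subst_mu, ih]
      refine congrArg mu (subst_congr ?_ B)
      rintro (_ | n)
      · rfl
      · simp only [upSubst_succ, shiftUp, rename_rename]; rfl

lemma subst_subst (σ τ : ℕ → Ty) (A : Ty) :
    subst σ (subst τ A) = subst (fun n => subst σ (τ n)) A := by
  induction A generalizing σ τ with
  | var n => rfl
  | arrow B C ihB ihC => simp [ihB, ihC]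
  | box B ih => simp [ih]
  | mu B ih =>
      simp only [subst_mu, ih]
      refine congrArg mu (subst_congr ?_ B)
      rintro (_ | n)
      · rfl
      · simp only [upSubst_succ, shiftUp, subst_rename, rename_subst]

@[simp] lemma subst_var_eq_self (A : Ty) : subst var A = A := by
  induction A with
  | var n => rfl
  | arrow B C ihB ihC => simp [ihB, ihC]
  | box B ih => simp [ih]
  | mu B ih => simp only [subst_mu]; rw [subst_congr (τ := var) (by rintro (_ | n) <;> rfl) B, ih]

lemma rename_eq_subst (f : ℕ → ℕ) (A : Ty) : rename f A = subst (fun n => var (f n)) A := by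
  simpa using subst_rename var f A

@[simp] lemma rename_id (A : Ty) : rename (fun n => n) A = A := by
  simp [rename_eq_subst]

end Ty

open Ty

lemma subst_openT (σ : ℕ → Ty) (A B : Ty) :
    subst σ (openT A B) = openT (subst (upSubst σ) A) (subst σ B) := by
  simp only [openT, subst_subst]
  refine subst_congr ?_ A
  rintro (_ | n)
  · rfl
  · simp [shiftUp, subst_rename]

lemma subst_unfoldMu (σ : ℕ → Ty) (A : Ty) :
    subst σ (unfoldMu A) = unfoldMu (subst (upSubst σ) A) :=
  subst_openT σ A (mu A)

/-- The substitution performed by `openT · B` below `k` binders. -/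
def openSubst (k : ℕ) (B : Ty) : ℕ → Ty := fun n =>
  if n < k then var n else if n = k then rename (· + k) B else var (n - 1)

@[simp] lemma openSubst_zero_zero (B : Ty) : openSubst 0 B 0 = B := by
  simp [openSubst]

@[simp] lemma openSubst_zero_succ (B : Ty) (n : ℕ) : openSubst 0 B (n + 1) = var n := by
  simp [openSubst]

lemma openT_eq_subst_openSubst (A B : Ty) : openT A B = subst (openSubst 0 B) A :=
  subst_congr (by rintro (_ | n) <;> simp) A

lemma unfoldMu_eq_subst_openSubst (A : Ty) : unfoldMu A = subst (openSubst 0 (mu A)) A :=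
  openT_eq_subst_openSubst A (mu A)

lemma upSubst_openSubst (k : ℕ) (B : Ty) (n : ℕ) :
    upSubst (openSubst k B) n = openSubst (k + 1) B n := by
  rcases n with _ | m
  · simp [openSubst]
  · simp only [upSubst_succ, openSubst, shiftUp, add_lt_add_iff_right, add_left_inj]
    split_ifs
    · rfl
    · rw [rename_rename]; rfl
    · simp only [rename_var, var.injEq]; omega

lemma subst_openSubst_mu (k : ℕ) (B A : Ty) :
    subst (openSubst k B) (mu A) = mu (subst (openSubst (k + 1) B) A) :=
  congrArg mu (subst_congr (upSubst_openSubst k B) A)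

/-! ### Tails and ⊤-variants -/

/-- The tail of a type expression, as far as ⊤-variance is concerned: `free n b` when it ends in
the free variable `n` below `b` boxes, `top` for a ⊤-variant, and `loop b` when it ends below
`b` boxes in a variable bound by a `μ` of the tail with no box in between. -/
inductive Tail
  | free (n b : ℕ)
  | top
  | loop (b : ℕ)

namespace Tail

def box : Tail → Tail
  | free n b => free n (b + 1)
  | top => top
  | loop b => loop (b + 1)

def mu : Tail → Tail
  | free 0 0 => loop 0
  | free 0 (_ + 1) => top
  | free (n + 1) b => free n b
  | t => t

def boxes (b : ℕ) : Tail → Tail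
  | free n b' => free n (b + b')
  | top => top
  | loop b' => loop (b + b')

def rename (f : ℕ → ℕ) : Tail → Tail
  | free n b => free (f n) b
  | t => t

def openWith : Tail → Tail → Tail
  | free 0 b, s => s.boxes b
  | free (n + 1) b, _ => free n b
  | t, _ => t

@[simp] lemma boxes_zero (t : Tail) : t.boxes 0 = t := by
  cases t <;> simp [boxes]

lemma mu_boxes_rename_succ (t : Tail) (b : ℕ) : ((t.rename Nat.succ).boxes b).mu = t.boxes b := by
  cases t <;> rfl

@[simp] lemma boxes_eq_top {b : ℕ} {t : Tail} : t.boxes b = top ↔ t = top := by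
  cases t <;> simp [boxes]

end Tail

def tailOf : Ty → Tail
  | .var n => .free n 0
  | .arrow _ B => tailOf B
  | .box A => (tailOf A).box
  | .mu A => (tailOf A).mu

def Tail.subst (σ : ℕ → Ty) : Tail → Tail
  | free n b => (tailOf (σ n)).boxes b
  | t => t

instance : DecidablePred IsTV := fun A => inferInstanceAs (Decidable (tvAux A 0 0 = true))

lemma tvAux_iff (A : Ty) {d t : ℕ} (ht : t ≤ d) :
    tvAux A d t = true ↔
      tailOf A = .top ∨
        ∃ n b, tailOf A = .free n b ∧ n < d ∧ (d - t ≤ n ∨ b ≠ 0) := by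
  induction A generalizing d t with
  | var j => simp [tvAux, tailOf]; omega
  | arrow B C _ ihC => exact ihC ht
  | box B ih =>
      rw [tvAux, ih le_rfl]
      rcases h : tailOf B with ⟨n, b⟩ | _ | b <;> simp [tailOf, h, Tail.box]
  | mu B ih =>
      rw [tvAux, ih (by omega)]
      rcases h : tailOf B with ⟨_ | n, _ | b⟩ | _ | b <;> simp [tailOf, h, Tail.mu] <;> omega

lemma isTV_iff_tailOf (A : Ty) : IsTV A ↔ tailOf A = .top := by
  simpa [IsTV] using tvAux_iff A (d := 0) (t := 0) le_rfl

lemma isTV_box_iff (A : Ty) : IsTV (box A) ↔ IsTV A := Iff.rfl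

lemma isTV_arrow_iff (A B : Ty) : IsTV (arrow A B) ↔ IsTV B := Iff.rfl

lemma not_isTV_var (n : ℕ) : ¬ IsTV (var n) := by
  simp [isTV_iff_tailOf, tailOf]

lemma isTV_tyTop : IsTV tyTop := by decide

lemma tailOf_rename (f : ℕ → ℕ) (A : Ty) : tailOf (rename f A) = (tailOf A).rename f := by
  induction A generalizing f with
  | var n => rfl
  | arrow B C _ ihC => exact ihC f
  | box B ih => simp only [rename_box, tailOf, ih]; cases tailOf B <;> rfl
  | mu B ih =>
      simp only [rename_mu, tailOf, ih]
      rcases tailOf B with ⟨_ | n, _ | b⟩ | _ | b <;> rfl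

lemma isTV_rename_iff (f : ℕ → ℕ) (A : Ty) : IsTV (rename f A) ↔ IsTV A := by
  rw [isTV_iff_tailOf, isTV_iff_tailOf, tailOf_rename]
  cases tailOf A <;> simp [Tail.rename]

lemma tailOf_subst (σ : ℕ → Ty) (A : Ty) : tailOf (subst σ A) = (tailOf A).subst σ := by
  induction A generalizing σ with
  | var n => simp [tailOf, Tail.subst]
  | arrow B C _ ihC => exact ihC σ
  | box B ih =>
      simp only [subst_box, tailOf, ih]
      rcases tailOf B with ⟨n, b⟩ | _ | b <;> simp only [Tail.subst, Tail.box]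
      cases tailOf (σ n) <;> simp [Tail.boxes] <;> omega
  | mu B ih =>
      simp only [subst_mu, tailOf, ih]
      rcases tailOf B with ⟨_ | n, _ | b⟩ | _ | b <;>
        simp only [Tail.subst, tailOf, upSubst_zero, upSubst_succ, shiftUp, tailOf_rename,
          Tail.mu_boxes_rename_succ] <;> rfl

lemma isTV_subst_iff (σ : ℕ → Ty) (A : Ty) :
    IsTV (subst σ A) ↔ IsTV A ∨ ∃ n b, tailOf A = .free n b ∧ IsTV (σ n) := by
  simp only [isTV_iff_tailOf, tailOf_subst]
  rcases tailOf A with ⟨n, b⟩ | _ | b <;> simp [Tail.subst]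

lemma isTV_subst {A : Ty} (σ : ℕ → Ty) (h : IsTV A) : IsTV (subst σ A) :=
  (isTV_subst_iff σ A).2 (Or.inl h)

lemma isTV_subst_iff_of_forall {σ : ℕ → Ty} (hσ : ∀ n, ¬ IsTV (σ n)) (A : Ty) :
    IsTV (subst σ A) ↔ IsTV A := by
  rw [isTV_subst_iff]
  exact ⟨fun h => h.resolve_right fun ⟨n, _, _, hn⟩ => hσ n hn, Or.inl⟩

lemma not_isTV_upSubst {σ : ℕ → Ty} (hσ : ∀ n, ¬ IsTV (σ n)) (n : ℕ) :
    ¬ IsTV (upSubst σ n) := by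
  rcases n with _ | m
  · exact not_isTV_var 0
  · simpa [shiftUp, isTV_rename_iff] using hσ m

lemma not_isTV_openSubst {B : Ty} (hB : ¬ IsTV B) (k n : ℕ) : ¬ IsTV (openSubst k B n) := by
  unfold openSubst
  split_ifs
  · exact not_isTV_var n
  · rwa [isTV_rename_iff]
  · exact not_isTV_var _

lemma tailOf_openT (A B : Ty) : tailOf (openT A B) = (tailOf A).openWith (tailOf B) := by
  rw [openT_eq_subst_openSubst, tailOf_subst]
  rcases tailOf A with ⟨_ | n, b⟩ | _ | b <;>
    simp [Tail.subst, Tail.openWith, tailOf, Tail.boxes]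

lemma tailOf_unfoldMu (A : Ty) : tailOf (unfoldMu A) = tailOf (mu A) := by
  simp only [unfoldMu, tailOf_openT, tailOf]
  rcases tailOf A with ⟨_ | n, _ | b⟩ | _ | b <;> rfl

lemma isTV_unfoldMu_iff (A : Ty) : IsTV (unfoldMu A) ↔ IsTV (mu A) := by
  rw [isTV_iff_tailOf, isTV_iff_tailOf, tailOf_unfoldMu]

lemma isTV_mu_rename_iff (f : ℕ → ℕ) (A : Ty) :
    IsTV (mu (rename (upRen f) A)) ↔ IsTV (mu A) :=
  isTV_rename_iff f (mu A)

lemma isTV_mu_subst_iff_of_forall {σ : ℕ → Ty} (hσ : ∀ n, ¬ IsTV (σ n)) (A : Ty) :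
    IsTV (mu (subst (upSubst σ) A)) ↔ IsTV (mu A) :=
  isTV_subst_iff_of_forall hσ (mu A)

lemma isTV_mu_subst_openSubst_iff {B : Ty} (hB : ¬ IsTV B) {k : ℕ} (A : Ty) :
    IsTV (mu (subst (openSubst (k + 1) B) A)) ↔ IsTV (mu A) := by
  rw [← subst_openSubst_mu]
  exact isTV_subst_iff_of_forall (not_isTV_openSubst hB k) _

/-! ### Occurrence depth and junk depth -/

/-- The least number of boxes above a free occurrence of `n` in `A`, ignoring the parts of `A`
that a ⊤-variant makes irrelevant. -/
noncomputable def occDepth : Ty → ℕ → ℕ∞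
  | .var m, n => if m = n then 0 else ⊤
  | .box A, n => if IsTV A then ⊤ else 1 + occDepth A n
  | .arrow A B, n => if IsTV B then ⊤ else min (occDepth A n) (occDepth B n)
  | .mu A, n => if IsTV (.mu A) then ⊤ else occDepth A (n + 1)

open Classical in
/-- The least number of boxes above a subexpression `μX.B` with `B` not proper in `X`, ignoring
the same parts as `occDepth`; it is `⊤` on type expressions. -/
noncomputable def junkDepth : Ty → ℕ∞
  | .var _ => ⊤
  | .box A => if IsTV A then ⊤ else 1 + junkDepth A
  | .arrow A B => if IsTV B then ⊤ else min (junkDepth A) (junkDepth B)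
  | .mu A => if IsTV (.mu A) then ⊤ else if Proper A 0 then junkDepth A else 0

lemma proper_iff_one_le_occDepth (A : Ty) (X : ℕ) : Proper A X ↔ 1 ≤ occDepth A X := by
  induction A generalizing X with
  | var n => by_cases h : n = X <;> simp [Proper, occDepth, h]
  | box B ih => by_cases h : IsTV B <;> simp [Proper, occDepth, h]
  | arrow B C ihB ihC => by_cases h : IsTV C <;> simp [Proper, occDepth, h, ihB, ihC]
  | mu B ih => by_cases h : IsTV (mu B) <;> simp [Proper, occDepth, h, ih]

lemma junkDepth_of_isTV {A : Ty} (h : IsTV A) : junkDepth A = ⊤ := by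
  cases A with
  | var n => rfl
  | box B => simp [junkDepth, (isTV_box_iff B).1 h]
  | arrow B C => simp [junkDepth, (isTV_arrow_iff B C).1 h]
  | mu B => simp [junkDepth, h]

lemma junkDepth_eq_top_of_wf {A : Ty} (h : WF A) : junkDepth A = ⊤ := by
  induction A with
  | var n => rfl
  | box B ih => simp [junkDepth, ih h]
  | arrow B C ihB ihC => simp [junkDepth, ihB h.1, ihC h.2]
  | mu B ih => simp [junkDepth, h.2, ih h.1]

lemma occDepth_rename {f : ℕ → ℕ} (hf : Function.Injective f) (A : Ty) (n : ℕ) :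
    occDepth (rename f A) (f n) = occDepth A n := by
  induction A generalizing f n with
  | var m => simp [occDepth, hf.eq_iff]
  | box B ih => simp only [rename_box, occDepth, isTV_rename_iff, ih hf]
  | arrow B C ihB ihC => simp only [rename_arrow, occDepth, isTV_rename_iff, ihB hf, ihC hf]
  | mu B ih =>
      simp only [rename_mu, occDepth, isTV_mu_rename_iff]
      rw [← upRen_succ, ih (upRen_injective hf)]

lemma occDepth_rename_of_forall_ne {f : ℕ → ℕ} {m : ℕ} (hf : ∀ n, f n ≠ m) (A : Ty) :
    occDepth (rename f A) m = ⊤ := by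
  induction A generalizing f m with
  | var n => simp [occDepth, hf n]
  | box B ih => simp [occDepth, ih hf]
  | arrow B C ihB ihC => simp [occDepth, ihB hf, ihC hf]
  | mu B ih =>
      simp only [rename_mu, occDepth]
      rw [ih (by rintro (_ | n) <;> simp [hf])]
      simp

lemma proper_rename_iff {f : ℕ → ℕ} (hf : Function.Injective f) (A : Ty) (n : ℕ) :
    Proper (rename f A) (f n) ↔ Proper A n := by
  rw [proper_iff_one_le_occDepth, proper_iff_one_le_occDepth, occDepth_rename hf]

lemma junkDepth_rename {f : ℕ → ℕ} (hf : Function.Injective f) (A : Ty) :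
    junkDepth (rename f A) = junkDepth A := by
  induction A generalizing f with
  | var n => rfl
  | box B ih => simp only [rename_box, junkDepth, isTV_rename_iff, ih hf]
  | arrow B C ihB ihC => simp only [rename_arrow, junkDepth, isTV_rename_iff, ihB hf, ihC hf]
  | mu B ih =>
      have hB := proper_rename_iff (upRen_injective hf) B 0
      simp only [upRen_zero] at hB
      simp only [rename_mu, junkDepth, isTV_mu_rename_iff, ih (upRen_injective hf)]
      rw [hB]

lemma occDepth_subst_of_fixes {σ : ℕ → Ty} (hσ : ∀ n, ¬ IsTV (σ n)) {j : ℕ}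
    (hj : σ j = var j) (hne : ∀ n, n ≠ j → occDepth (σ n) j = ⊤) (A : Ty) :
    occDepth (subst σ A) j = occDepth A j := by
  induction A generalizing σ j with
  | var m =>
      by_cases h : m = j
      · subst h; simp [hj]
      · simp [occDepth, hne m h, h]
  | box B ih => simp only [subst_box, occDepth, isTV_subst_iff_of_forall hσ, ih hσ hj hne]
  | arrow B C ihB ihC =>
      simp only [subst_arrow, occDepth, isTV_subst_iff_of_forall hσ, ihB hσ hj hne,
        ihC hσ hj hne]
  | mu B ih =>
      simp only [subst_mu, occDepth, isTV_mu_subst_iff_of_forall hσ]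
      refine congrArg _ (ih (not_isTV_upSubst hσ) (by simp [hj, shiftUp]) ?_)
      rintro (_ | n) hn
      · simp [occDepth]
      · simpa [shiftUp] using (occDepth_rename Nat.succ_injective (σ n) j).trans
          (hne n (by omega))

lemma occDepth_subst_openSubst_of_lt {B : Ty} (hB : ¬ IsTV B) (A : Ty) {k m : ℕ} (h : m < k) :
    occDepth (subst (openSubst k B) A) m = occDepth A m := by
  refine occDepth_subst_of_fixes (not_isTV_openSubst hB k) (by simp [openSubst, h]) ?_ A
  intro n hn
  unfold openSubst
  split_ifs
  · simp [occDepth, hn]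
  · exact occDepth_rename_of_forall_ne (by omega) B
  · simp [occDepth]; omega

lemma junkDepth_subst_openSubst {B : Ty} (hB : ¬ IsTV B) (A : Ty) (k : ℕ) :
    junkDepth (subst (openSubst k B) A) = min (junkDepth A) (occDepth A k + junkDepth B) := by
  induction A generalizing k with
  | var n =>
      simp only [subst_var, openSubst, occDepth]
      split_ifs <;> first | omega | simp_all [junkDepth, junkDepth_rename (add_left_injective k)]
  | box C ih =>
      simp only [subst_box, junkDepth, occDepth, isTV_subst_iff_of_forall (not_isTV_openSubst hB k)]
      split_ifs
      · simp
      · rw [ih, add_min, add_assoc]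
  | arrow C D ihC ihD =>
      simp only [subst_arrow, junkDepth, occDepth,
        isTV_subst_iff_of_forall (not_isTV_openSubst hB k)]
      split_ifs
      · simp
      · rw [ihC, ihD, min_add, min_min_min_comm]
  | mu C ih =>
      have hC : Proper (subst (openSubst (k + 1) B) C) 0 ↔ Proper C 0 := by
        rw [proper_iff_one_le_occDepth, proper_iff_one_le_occDepth,
          occDepth_subst_openSubst_of_lt hB C (Nat.succ_pos k)]
      rw [subst_openSubst_mu]
      simp only [junkDepth, occDepth, isTV_mu_subst_openSubst_iff hB]
      rw [hC]
      split_ifs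
      · simp
      · rw [ih]
      · simp

lemma junkDepth_openT {B : Ty} (hB : ¬ IsTV B) (A : Ty) :
    junkDepth (openT A B) = min (junkDepth A) (occDepth A 0 + junkDepth B) := by
  rw [openT_eq_subst_openSubst, junkDepth_subst_openSubst hB]

lemma junkDepth_unfoldMu (A : Ty) : junkDepth (unfoldMu A) = junkDepth (mu A) := by
  by_cases htv : IsTV (mu A)
  · rw [junkDepth_of_isTV htv, junkDepth_of_isTV ((isTV_unfoldMu_iff A).2 htv)]
  · rw [unfoldMu, junkDepth_openT htv]
    simp only [junkDepth, if_neg htv]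
    by_cases hp : Proper A 0
    · simp only [if_pos hp, min_eq_left le_add_self]
    · have : occDepth A 0 = 0 := by
        simpa [proper_iff_one_le_occDepth, Order.one_le_iff_ne_zero] using hp
      simp [hp, this]

lemma occDepth_le_of_tailOf_eq_free {A : Ty} {n b : ℕ} (h : tailOf A = .free n b) :
    occDepth A n ≤ b := by
  induction A generalizing n b with
  | var j => simp_all [tailOf, occDepth]
  | box B ih =>
      rcases hB : tailOf B with ⟨n', b'⟩ | _ | b' <;> simp [tailOf, hB, Tail.box] at h
      obtain ⟨rfl, rfl⟩ := h
      have hB' : ¬ IsTV B := by simp [isTV_iff_tailOf, hB]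
      simp only [occDepth, if_neg hB', Nat.cast_add, Nat.cast_one, add_comm (b' : ℕ∞)]
      exact add_le_add_right (ih hB) 1
  | arrow B C _ ihC =>
      have hC : ¬ IsTV C := by simp_all [isTV_iff_tailOf, tailOf]
      simp only [occDepth, if_neg hC]
      exact (min_le_right _ _).trans (ihC h)
  | mu B ih =>
      have hB' : ¬ IsTV (mu B) := by simp [isTV_iff_tailOf, h]
      rcases hB : tailOf B with ⟨_ | n', _ | b'⟩ | _ | b' <;> simp [tailOf, hB, Tail.mu] at h
      all_goals obtain ⟨rfl, rfl⟩ := h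
      all_goals simpa only [occDepth, if_neg hB'] using ih hB

/-! ### Properness -/

lemma proper_rename_of_forall_ne {f : ℕ → ℕ} {m : ℕ} (hf : ∀ n, f n ≠ m) (A : Ty) :
    Proper (rename f A) m := by
  simp [proper_iff_one_le_occDepth, occDepth_rename_of_forall_ne hf]

lemma proper_subst {σ : ℕ → Ty} {X Y : ℕ} {A : Ty} (hA : Proper A X)
    (hσ : ∀ n, n ≠ X → Proper (σ n) Y) : Proper (subst σ A) Y := by
  induction A generalizing σ X Y with
  | var n => exact hσ n hA
  | box B _ => trivial
  | arrow B C ihB ihC =>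
      rcases hA with ⟨hB, hC⟩ | hC
      · exact Or.inl ⟨ihB hB hσ, ihC hC hσ⟩
      · exact Or.inr (isTV_subst σ hC)
  | mu B ih =>
      rcases hA with hB | hB
      · refine Or.inl (ih hB ?_)
        rintro (_ | n) hn
        · simp [Proper]
        · simpa [shiftUp] using
            (proper_rename_iff Nat.succ_injective (σ n) Y).2 (hσ n (by omega))
      · exact Or.inr (isTV_subst σ hB)

lemma WF.rename {f : ℕ → ℕ} (hf : Function.Injective f) {A : Ty} (h : WF A) :
    WF (Ty.rename f A) := by
  induction A generalizing f with
  | var n => trivial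
  | box B ih => exact ih hf h
  | arrow B C ihB ihC => exact ⟨ihB hf h.1, ihC hf h.2⟩
  | mu B ih =>
      exact ⟨ih (upRen_injective hf) h.1, (proper_rename_iff (upRen_injective hf) B 0).2 h.2⟩

lemma WF.subst {σ : ℕ → Ty} {A : Ty} (h : WF A) (hσ : ∀ n, WF (σ n)) :
    WF (Ty.subst σ A) := by
  induction A generalizing σ with
  | var n => exact hσ n
  | box B ih => exact ih h hσ
  | arrow B C ihB ihC => exact ⟨ihB h.1 hσ, ihC h.2 hσ⟩
  | mu B ih =>
      refine ⟨ih h.1 ?_, proper_subst h.2 ?_⟩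
      · rintro (_ | n)
        · trivial
        · exact (hσ n).rename Nat.succ_injective
      · rintro (_ | n) hn
        · exact absurd rfl hn
        · exact proper_rename_of_forall_ne (fun _ => Nat.succ_ne_zero _) (σ n)

lemma WF.unfoldMu {A : Ty} (h : WF (mu A)) : WF (unfoldMu A) :=
  h.1.subst (by rintro (_ | n) <;> first | exact h | trivial)

lemma proper_unfoldMu {A : Ty} {X : ℕ} (h : Proper A (X + 1)) : Proper (unfoldMu A) X :=
  proper_subst h (by rintro (_ | n) hn; exacts [Or.inl h, fun h' => hn (by rw [h'])])

lemma proper_subst_upSubst_iff {σ : ℕ → Ty} (hσ : ∀ n, ¬ IsTV (σ n)) (A : Ty) :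
    Proper (subst (upSubst σ) A) 0 ↔ Proper A 0 := by
  rw [proper_iff_one_le_occDepth, proper_iff_one_le_occDepth,
    occDepth_subst_of_fixes (not_isTV_upSubst hσ) rfl _ A]
  rintro (_ | n) hn
  · exact absurd rfl hn
  · exact occDepth_rename_of_forall_ne (fun _ => Nat.succ_ne_zero _) (σ n)

/-! ### The semantics of pseudo type expressions -/

/-- The recursion measure of the semantics within one world: the clauses for `→` and `μ` stay
in the world, while `•` passes to later worlds. -/
def weight : Ty → ℕ
  | .var _ => 0
  | .box _ => 0
  | .arrow A B => if IsTV B then 0 else weight A + weight B + 1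
  | .mu A => if IsTV (.mu A) then 0 else weight A + 1

lemma weight_left_lt_arrow {B : Ty} (hB : ¬ IsTV B) (A : Ty) : weight A < weight (arrow A B) := by
  simp only [weight, if_neg hB]; omega

lemma weight_right_lt_arrow {B : Ty} (hB : ¬ IsTV B) (A : Ty) : weight B < weight (arrow A B) := by
  simp only [weight, if_neg hB]; omega

lemma weight_subst_openSubst_le {B : Ty} (hB : ¬ IsTV B) {A : Ty} {k : ℕ} (hA : Proper A k) :
    weight (subst (openSubst k B) A) ≤ weight A := by
  induction A generalizing k with
  | var j =>
      simp only [subst_var, openSubst]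
      split_ifs <;> simp_all [weight, Proper]
  | box C _ => exact le_rfl
  | arrow C D ihC ihD =>
      simp only [subst_arrow, weight, isTV_subst_iff_of_forall (not_isTV_openSubst hB k)]
      split_ifs with hD
      · exact le_rfl
      · have := ihC (hA.resolve_right hD).1
        have := ihD (hA.resolve_right hD).2
        omega
  | mu C ih =>
      rw [subst_openSubst_mu]
      simp only [weight, isTV_mu_subst_openSubst_iff hB]
      split_ifs with hC
      · exact le_rfl
      · exact Nat.add_le_add_right (ih (hA.resolve_right hC)) 1

lemma weight_unfoldMu_lt {A : Ty} (hp : Proper A 0) (htv : ¬ IsTV (mu A)) :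
    weight (unfoldMu A) < weight (mu A) := by
  rw [unfoldMu_eq_subst_openSubst]
  simp only [weight, if_neg htv]
  exact Nat.lt_succ_of_le (weight_subst_openSubst_le htv hp)

open Relation

section Semantics

variable {W V : Type*} {acc : W → W → Prop}

variable (acc) in
def SemLt : W × Ty → W × Ty → Prop :=
  Prod.Lex (TransGen fun q p => acc p q) (fun B A => weight B < weight A)

lemma semLt_wf (hwf : ConverselyWF acc) : WellFounded (SemLt acc) :=
  hwf.transGen.prod_lex (InvImage.wf weight wellFounded_lt)

lemma SemLt.of_transGen {p q : W} (h : TransGen acc p q) (B A : Ty) : SemLt acc (q, B) (p, A) :=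
  Prod.Lex.left _ _ (transGen_swap.2 h)

lemma SemLt.of_acc {p q : W} (h : acc p q) (B A : Ty) : SemLt acc (q, B) (p, A) :=
  .of_transGen (.single h) B A

lemma SemLt.of_reflTransGen {p q : W} (h : ReflTransGen acc p q) {B A : Ty}
    (hw : weight B < weight A) : SemLt acc (q, B) (p, A) := by
  rcases reflTransGen_iff_eq_or_transGen.1 h with rfl | h
  · exact Prod.Lex.right _ hw
  · exact .of_transGen h B A

lemma SemLt.arrow_left {p q : W} (h : ReflTransGen acc p q) {B C : Ty} (hC : ¬ IsTV C) :
    SemLt acc (q, B) (p, arrow B C) :=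
  .of_reflTransGen h (weight_left_lt_arrow hC B)

lemma SemLt.arrow_right {p q : W} (h : ReflTransGen acc p q) {B C : Ty} (hC : ¬ IsTV C) :
    SemLt acc (q, C) (p, arrow B C) :=
  .of_reflTransGen h (weight_right_lt_arrow hC B)

lemma SemLt.unfoldMu {B : Ty} (hB : Proper B 0) (htv : ¬ IsTV (mu B)) (p : W) :
    SemLt acc (p, unfoldMu B) (p, mu B) :=
  Prod.Lex.right _ (weight_unfoldMu_lt hB htv)

open Classical in
noncomputable def semAux (hwf : ConverselyWF acc) (ap : V → V → V) (η : ℕ → W → Set V) :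
    W × Ty → Set V :=
  (semLt_wf hwf).fix fun
    | (p, .var n), _ => η n p
    | (p, .box B), rec => {u | ∀ q (hq : acc p q), u ∈ rec (q, B) (.of_acc hq _ _)}
    | (p, .arrow B C), rec =>
        if hC : IsTV C then Set.univ else
          {u | ∀ q (hq : ReflTransGen acc p q),
            ∀ v ∈ rec (q, B) (.arrow_left hq hC), ap u v ∈ rec (q, C) (.arrow_right hq hC)}
    | (p, .mu B), rec =>
        if htv : IsTV (.mu B) then Set.univ else
          if hB : Proper B 0 then rec (p, unfoldMu B) (.unfoldMu hB htv p) else ∅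

noncomputable def sem (hwf : ConverselyWF acc) (ap : V → V → V) (A : Ty)
    (η : ℕ → W → Set V) (p : W) : Set V :=
  semAux hwf ap η (p, A)

lemma sem_induction (hwf : ConverselyWF acc) {P : W → Ty → Prop}
    (h : ∀ p A, (∀ q B, SemLt acc (q, B) (p, A) → P q B) → P p A) (p : W) (A : Ty) :
    P p A :=
  (semLt_wf hwf).induction (C := fun x => P x.1 x.2) (p, A)
    fun x ih => h x.1 x.2 fun q B hqB => ih (q, B) hqB

variable (hwf : ConverselyWF acc) (ap : V → V → V)

variable {η : ℕ → W → Set V}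

lemma sem_var (n : ℕ) (p : W) : sem hwf ap (var n) η p = η n p := by
  rw [sem, semAux, WellFounded.fix_eq]

lemma sem_box (B : Ty) (p : W) :
    sem hwf ap (box B) η p = {u | ∀ q, acc p q → u ∈ sem hwf ap B η q} := by
  rw [sem, semAux, WellFounded.fix_eq]; rfl

lemma sem_arrow_of_isTV {C : Ty} (hC : IsTV C) (B : Ty) (p : W) :
    sem hwf ap (arrow B C) η p = Set.univ := by
  rw [sem, semAux, WellFounded.fix_eq]; exact dif_pos hC

lemma sem_mu_of_isTV {B : Ty} (htv : IsTV (mu B)) (p : W) : sem hwf ap (mu B) η p = Set.univ := by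
  rw [sem, semAux, WellFounded.fix_eq]; exact dif_pos htv

lemma sem_mu {B : Ty} (htv : ¬ IsTV (mu B)) (hB : Proper B 0) (p : W) :
    sem hwf ap (mu B) η p = sem hwf ap (unfoldMu B) η p := by
  rw [sem, semAux, WellFounded.fix_eq]; exact (dif_neg htv).trans (dif_pos hB)

lemma sem_mu_of_not_proper {B : Ty} (htv : ¬ IsTV (mu B)) (hB : ¬ Proper B 0) (p : W) :
    sem hwf ap (mu B) η p = ∅ := by
  rw [sem, semAux, WellFounded.fix_eq]; exact (dif_neg htv).trans (dif_neg hB)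

lemma sem_of_isTV {A : Ty} (hA : IsTV A) (p : W) : sem hwf ap A η p = Set.univ := by
  induction p using hwf.induction generalizing A with
  | _ p ih =>
    cases A with
    | var n => exact absurd hA (not_isTV_var n)
    | box B =>
        rw [sem_box]
        exact Set.eq_univ_of_forall fun u q hq => by rw [ih q hq ((isTV_box_iff B).1 hA)]; trivial
    | arrow B C => exact sem_arrow_of_isTV hwf ap ((isTV_arrow_iff B C).1 hA) B p
    | mu B => exact sem_mu_of_isTV hwf ap hA p

lemma sem_arrow (B C : Ty) (p : W) :
    sem hwf ap (arrow B C) η p =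
      {u | ∀ q, ReflTransGen acc p q →
        ∀ v ∈ sem hwf ap B η q, ap u v ∈ sem hwf ap C η q} := by
  by_cases hC : IsTV C
  · simp [sem_arrow_of_isTV hwf ap hC, sem_of_isTV hwf ap hC]
  · rw [sem, semAux, WellFounded.fix_eq]; exact dif_neg hC

lemma sem_box_congr {B B' : Ty} {η' : ℕ → W → Set V} {p : W}
    (h : ∀ q, acc p q → sem hwf ap B η q = sem hwf ap B' η' q) :
    sem hwf ap (box B) η p = sem hwf ap (box B') η' p := by
  simp only [sem_box]
  ext u
  exact forall₂_congr fun q hq => by rw [h q hq]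

lemma sem_arrow_congr {B B' C C' : Ty} {η' : ℕ → W → Set V} {p : W} (hC : IsTV C ↔ IsTV C')
    (h : ¬ IsTV C → ∀ q, ReflTransGen acc p q →
      sem hwf ap B η q = sem hwf ap B' η' q ∧ sem hwf ap C η q = sem hwf ap C' η' q) :
    sem hwf ap (arrow B C) η p = sem hwf ap (arrow B' C') η' p := by
  by_cases hCtv : IsTV C
  · rw [sem_arrow_of_isTV hwf ap hCtv, sem_arrow_of_isTV hwf ap (hC.1 hCtv)]
  · simp only [sem_arrow]
    ext u
    exact forall₂_congr fun q hq => by rw [(h hCtv q hq).1, (h hCtv q hq).2]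

lemma sem_mu_congr {B B' : Ty} {η' : ℕ → W → Set V} {p : W}
    (htv : IsTV (mu B) ↔ IsTV (mu B')) (hB : Proper B 0 ↔ Proper B' 0)
    (h : ¬ IsTV (mu B) → Proper B 0 →
      sem hwf ap (unfoldMu B) η p = sem hwf ap (unfoldMu B') η' p) :
    sem hwf ap (mu B) η p = sem hwf ap (mu B') η' p := by
  by_cases hBtv : IsTV (mu B)
  · rw [sem_mu_of_isTV hwf ap hBtv, sem_mu_of_isTV hwf ap (htv.1 hBtv)]
  by_cases hBp : Proper B 0
  · rw [sem_mu hwf ap hBtv hBp, sem_mu hwf ap (mt htv.2 hBtv) (hB.1 hBp), h hBtv hBp]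
  · rw [sem_mu_of_not_proper hwf ap hBtv hBp,
      sem_mu_of_not_proper hwf ap (mt htv.2 hBtv) (mt hB.2 hBp)]

lemma sem_congr_env {η₁ η₂ : ℕ → W → Set V} (p : W) (A : Ty)
    (h : ∀ n q, ReflTransGen acc p q → η₁ n q = η₂ n q) :
    sem hwf ap A η₁ p = sem hwf ap A η₂ p := by
  induction p, A using sem_induction hwf generalizing η₁ η₂ with
  | h p A ih =>
    cases A with
    | var n => simp only [sem_var]; exact h n p .refl
    | box B =>
        exact sem_box_congr hwf ap fun q hq =>
          ih q B (.of_acc hq _ _) fun n r hr => h n r (hr.head hq)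
    | arrow B C =>
        exact sem_arrow_congr hwf ap .rfl fun hC q hq =>
          ⟨ih q B (.arrow_left hq hC) fun n r hr => h n r (hq.trans hr),
            ih q C (.arrow_right hq hC) fun n r hr => h n r (hq.trans hr)⟩
    | mu B => exact sem_mu_congr hwf ap .rfl .rfl fun htv hB => ih p _ (.unfoldMu hB htv p) h

lemma sem_mono (hη : Hereditary acc η) {p q : W} (hpq : acc p q) (A : Ty) :
    sem hwf ap A η p ⊆ sem hwf ap A η q := by
  induction p, A using sem_induction hwf generalizing q with
  | h p A ih =>
    cases A with
    | var n => simpa only [sem_var] using hη n p q hpq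
    | box B =>
        simp only [sem_box]
        exact fun u hu r hqr => ih q B (.of_acc hpq _ _) hqr (hu q hpq)
    | arrow B C =>
        simp only [sem_arrow]
        exact fun u hu r hqr => hu r (hqr.head hpq)
    | mu B =>
        by_cases htv : IsTV (mu B)
        · simp only [sem_mu_of_isTV hwf ap htv, subset_refl]
        by_cases hB : Proper B 0
        · simp only [sem_mu hwf ap htv hB]
          exact ih p _ (.unfoldMu hB htv p) hpq
        · simp only [sem_mu_of_not_proper hwf ap htv hB, subset_refl]

lemma sem_mono_of_reflTransGen (hη : Hereditary acc η) {p q : W} (hpq : ReflTransGen acc p q)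
    (A : Ty) : sem hwf ap A η p ⊆ sem hwf ap A η q := by
  induction hpq with
  | refl => exact subset_rfl
  | tail _ hqr ih => exact ih.trans (sem_mono hwf ap hη hqr A)

lemma sem_congr_proper {η₁ η₂ : ℕ → W → Set V} {X : ℕ} (p : W) {A : Ty}
    (hA : Proper A X) (hne : ∀ n q, n ≠ X → η₁ n q = η₂ n q)
    (hX : ∀ q, TransGen acc p q → η₁ X q = η₂ X q) :
    sem hwf ap A η₁ p = sem hwf ap A η₂ p := by
  induction p, A using sem_induction hwf generalizing X with
  | h p A ih =>
    cases A with
    | var n => simp only [sem_var]; exact hne n p hA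
    | box B =>
        refine sem_box_congr hwf ap fun q hq => sem_congr_env hwf ap q B fun n r hr => ?_
        by_cases hn : n = X
        · exact hn ▸ hX r (.head' hq hr)
        · exact hne n r hn
    | arrow B C =>
        refine sem_arrow_congr hwf ap .rfl fun hC q hq => ?_
        have hX' : ∀ r, TransGen acc q r → η₁ X r = η₂ X r :=
          fun r hr => hX r (.trans_right hq hr)
        exact ⟨ih q B (.arrow_left hq hC) (hA.resolve_right hC).1 hne hX',
          ih q C (.arrow_right hq hC) (hA.resolve_right hC).2 hne hX'⟩
    | mu B =>
        exact sem_mu_congr hwf ap .rfl .rfl fun htv hB =>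
          ih p _ (.unfoldMu hB htv p) (proper_unfoldMu (hA.resolve_right htv)) hne hX

lemma sem_subst {σ : ℕ → Ty} (hσ : ∀ n, ¬ IsTV (σ n)) (p : W) (A : Ty) :
    sem hwf ap (subst σ A) η p = sem hwf ap A (fun n q => sem hwf ap (σ n) η q) p := by
  induction p, A using sem_induction hwf with
  | h p A ih =>
    cases A with
    | var n => rw [sem_var]; rfl
    | box B => exact sem_box_congr hwf ap fun q hq => ih q B (.of_acc hq _ _)
    | arrow B C =>
        exact sem_arrow_congr hwf ap (isTV_subst_iff_of_forall hσ C) fun hC q hq =>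
          ⟨ih q B (.arrow_left hq ((isTV_subst_iff_of_forall hσ C).not.1 hC)),
            ih q C (.arrow_right hq ((isTV_subst_iff_of_forall hσ C).not.1 hC))⟩
    | mu B =>
        have htv := isTV_mu_subst_iff_of_forall hσ B
        have hB := proper_subst_upSubst_iff hσ B
        rw [subst_mu]
        refine sem_mu_congr hwf ap htv hB fun hBtv hBp => ?_
        rw [← subst_unfoldMu]
        exact ih p _ (.unfoldMu (hB.1 hBp) (htv.not.1 hBtv) p)

lemma sem_box_arrow (hlin : LocallyLinear acc) (hη : Hereditary acc η) (A B : Ty) (p : W) :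
    sem hwf ap (box (arrow A B)) η p = sem hwf ap (arrow (box A) (box B)) η p := by
  simp only [sem_box, sem_arrow]
  ext u
  constructor
  · intro hu q hpq v hv r hqr
    obtain ⟨t, hpt, htr⟩ := TransGen.head'_iff.1 (TransGen.tail' hpq hqr)
    exact hu t hpt r htr v (hv r hqr)
  · intro hu q hpq r hqr v hv
    obtain ⟨t, hpt, htr⟩ := TransGen.tail'_iff.1 (TransGen.head' hpq hqr)
    -- `p ▷* s ▷ r` with every successor of `s` reachable from `r`, so `v ∈ •A` at `s`
    obtain ⟨s, hts, hsr, hs⟩ := hlin t r htr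
    have hv' : ∀ s', acc s s' → v ∈ sem hwf ap A η s' :=
      fun s' hss' => sem_mono_of_reflTransGen hwf ap hη (hs s' hss') A hv
    exact hu s (hpt.trans hts) v hv' r hsr

lemma sem_eq_mu_of_eq_openT {A C : Ty} (hC : Proper C 0) (htv : ¬ IsTV (mu C)) (hA : ¬ IsTV A)
    (h : ∀ p, sem hwf ap A η p = sem hwf ap (openT C A) η p) (p : W) :
    sem hwf ap A η p = sem hwf ap (mu C) η p := by
  induction p using hwf.transGen.induction with
  | _ p ih =>
    -- both sides are `C` with `X` read as themselves, and `X` only matters at later worlds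
    rw [h, sem_mu hwf ap htv hC, unfoldMu_eq_subst_openSubst, openT_eq_subst_openSubst,
      sem_subst hwf ap (not_isTV_openSubst hA 0), sem_subst hwf ap (not_isTV_openSubst htv 0)]
    refine sem_congr_proper hwf ap p hC (fun n q hn => ?_) fun q hq => ?_
    · obtain ⟨m, rfl⟩ := Nat.exists_eq_succ_of_ne_zero hn
      simp only [openSubst_zero_succ]
    · simpa only [openSubst_zero_zero] using ih q (transGen_swap.2 hq)

lemma interp_eq_sem (Int : Interp W acc V ap) (p : W) {A : Ty} (hA : WF A)
    (η : ℕ → W → Set V) :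
    Int.I A η p = sem hwf ap A η p := by
  induction p, A using sem_induction hwf with
  | h p A ih =>
    by_cases htv : IsTV A
    · rw [Int.I_tv A η p hA htv, sem_of_isTV hwf ap htv]
    cases A with
    | var n => rw [Int.I_var, sem_var]
    | box B =>
        rw [Int.I_box B η p hA htv, sem_box]
        ext u
        exact forall₂_congr fun q hq => by rw [ih q B (.of_acc hq _ _) hA]
    | arrow B C =>
        rw [Int.I_arrow B C η p hA.1 hA.2 htv, sem_arrow]
        ext u
        exact forall₂_congr fun q hq => by
          rw [ih q B (.arrow_left hq htv) hA.1, ih q C (.arrow_right hq htv) hA.2]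
    | mu B =>
        rw [Int.I_mu B η p hA htv, sem_mu hwf ap htv hA.2]
        exact ih p _ (.unfoldMu hA.2 htv p) hA.unfoldMu

end Semantics

/-! ### Soundness -/

lemma ENat.eq_of_eq_min_add {a c d : ℕ∞} (hd : 1 ≤ d) (h : a = min c (d + a)) : a = c := by
  rcases eq_or_ne a ⊤ with rfl | ha
  · simpa using h
  have hlt : a < d + a := by
    lift a to ℕ using ha
    induction d using ENat.recTopCoe with
    | top => simp
    | coe d => norm_cast at hd ⊢; omega
  rcases min_choice c (d + a) with hm | hm <;> rw [hm] at h
  · exact h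
  · exact absurd h hlt.ne

lemma isTV_iff_of_tailOf_eq {A B : Ty} (h : tailOf A = tailOf B) : IsTV A ↔ IsTV B := by
  rw [isTV_iff_tailOf, isTV_iff_tailOf, h]

lemma tailOf_openT_of_proper {C : Ty} (hC : Proper C 0) (htv : ¬ IsTV (mu C)) (A : Ty) :
    tailOf (openT C A) = tailOf (mu C) := by
  rw [isTV_iff_tailOf] at htv
  rw [tailOf_openT]
  rcases h : tailOf C with ⟨_ | n, _ | b⟩ | _ | b <;> simp only [tailOf, h, Tail.mu] at htv ⊢
  · have := (proper_iff_one_le_occDepth C 0).1 hC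
    have := occDepth_le_of_tailOf_eq_free h
    simp_all
  all_goals first | rfl | contradiction

lemma isTV_of_tailOf_eq_openT {A C : Ty} (h : tailOf A = tailOf (openT C A)) (htv : IsTV (mu C)) :
    IsTV A := by
  rw [isTV_iff_tailOf] at htv ⊢
  rw [tailOf_openT] at h
  rcases hC : tailOf C with ⟨_ | n, _ | b⟩ | _ | b <;> simp [tailOf, hC, Tail.mu] at htv
  · rcases hA : tailOf A with ⟨n, b'⟩ | _ | b' <;>
      simp [hC, hA, Tail.openWith, Tail.boxes] at h ⊢
  · simpa [hC, Tail.openWith] using h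

section Soundness

variable {W V : Type*} {acc : W → W → Prop} (hwf : ConverselyWF acc) (ap : V → V → V)

/-- What the rules of `≃` preserve. Equal tails make ⊤-variance invariant; equal junk depths,
rather than just junk-freeness, are what the uniqueness rule needs (`a = min c (d + a)` with
`d ≥ 1` forces `a = c`). -/
structure Agree (A B : Ty) : Prop where
  tailOf_eq : tailOf A = tailOf B
  junkDepth_eq : junkDepth A = junkDepth B
  sem_eq : junkDepth A = ⊤ →
    ∀ η, Hereditary acc η → ∀ p, sem hwf ap A η p = sem hwf ap B η p

variable {hwf ap}

lemma Agree.refl (A : Ty) : Agree hwf ap A A :=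
  ⟨rfl, rfl, fun _ _ _ _ => rfl⟩

lemma Agree.symm {A B : Ty} (h : Agree hwf ap A B) : Agree hwf ap B A :=
  ⟨h.tailOf_eq.symm, h.junkDepth_eq.symm,
    fun hB η hη p => (h.sem_eq (h.junkDepth_eq ▸ hB) η hη p).symm⟩

lemma Agree.trans {A B C : Ty} (h₁ : Agree hwf ap A B) (h₂ : Agree hwf ap B C) :
    Agree hwf ap A C :=
  ⟨h₁.tailOf_eq.trans h₂.tailOf_eq, h₁.junkDepth_eq.trans h₂.junkDepth_eq,
    fun hA η hη p =>
      (h₁.sem_eq hA η hη p).trans (h₂.sem_eq (h₁.junkDepth_eq ▸ hA) η hη p)⟩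

lemma Agree.of_isTV {A B : Ty} (hA : IsTV A) (hB : IsTV B) : Agree hwf ap A B :=
  ⟨by rw [(isTV_iff_tailOf A).1 hA, (isTV_iff_tailOf B).1 hB],
    by rw [junkDepth_of_isTV hA, junkDepth_of_isTV hB],
    fun _ _ _ p => by rw [sem_of_isTV hwf ap hA, sem_of_isTV hwf ap hB]⟩

lemma Agree.box {A B : Ty} (h : Agree hwf ap A B) : Agree hwf ap (.box A) (.box B) := by
  have htv := isTV_iff_of_tailOf_eq h.tailOf_eq
  refine ⟨by simp only [tailOf, h.tailOf_eq], by simp only [junkDepth, htv, h.junkDepth_eq], ?_⟩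
  intro hA η hη p
  have hA' : junkDepth A = ⊤ := by
    by_cases hAtv : IsTV A
    · exact junkDepth_of_isTV hAtv
    · simpa [junkDepth, hAtv] using hA
  exact sem_box_congr hwf ap fun q _ => h.sem_eq hA' η hη q

lemma Agree.arrow {A B C D : Ty} (h₁ : Agree hwf ap A C) (h₂ : Agree hwf ap B D) :
    Agree hwf ap (.arrow A B) (.arrow C D) := by
  have htv := isTV_iff_of_tailOf_eq h₂.tailOf_eq
  refine ⟨h₂.tailOf_eq,
    by simp only [junkDepth, htv, h₁.junkDepth_eq, h₂.junkDepth_eq], ?_⟩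
  intro hAB η hη p
  refine sem_arrow_congr hwf ap htv fun hB q _ => ?_
  have hAB' : junkDepth A = ⊤ ∧ junkDepth B = ⊤ := by simpa [junkDepth, hB] using hAB
  exact ⟨h₁.sem_eq hAB'.1 η hη q, h₂.sem_eq hAB'.2 η hη q⟩

lemma Agree.arrow_tyTop (A : Ty) : Agree hwf ap (.arrow A tyTop) tyTop :=
  .of_isTV isTV_tyTop isTV_tyTop

lemma Agree.mu_unfoldMu (A : Ty) : Agree hwf ap (.mu A) (unfoldMu A) := by
  refine ⟨(tailOf_unfoldMu A).symm, (junkDepth_unfoldMu A).symm, fun hA η _ p => ?_⟩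
  by_cases htv : IsTV (mu A)
  · rw [sem_of_isTV hwf ap htv, sem_of_isTV hwf ap ((isTV_unfoldMu_iff A).2 htv)]
  · have hp : Proper A 0 := by
      by_contra hp
      simp [junkDepth, htv, hp] at hA
    exact sem_mu hwf ap htv hp p

lemma Agree.mu_of_openT {A C : Ty} (h : Agree hwf ap A (openT C A)) (hC : Proper C 0) :
    Agree hwf ap A (.mu C) := by
  by_cases htv : IsTV (mu C)
  · exact .of_isTV (isTV_of_tailOf_eq_openT h.tailOf_eq htv) htv
  have htail := h.tailOf_eq.trans (tailOf_openT_of_proper hC htv A)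
  have hA : ¬ IsTV A := (isTV_iff_of_tailOf_eq htail).not.2 htv
  have hjunk : junkDepth A = junkDepth (mu C) := by
    rw [junkDepth, if_neg htv, if_pos hC]
    exact ENat.eq_of_eq_min_add ((proper_iff_one_le_occDepth C 0).1 hC)
      (h.junkDepth_eq.trans (junkDepth_openT hA C))
  exact ⟨htail, hjunk, fun hA' η hη =>
    sem_eq_mu_of_eq_openT hwf ap hC htv hA (h.sem_eq hA' η hη)⟩

lemma Agree.box_arrow (hlin : LocallyLinear acc) (A B : Ty) :
    Agree hwf ap (.box (.arrow A B)) (.arrow (.box A) (.box B)) := by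
  refine ⟨rfl, ?_, fun _ η hη p => sem_box_arrow hwf ap hlin hη A B p⟩
  by_cases hB : IsTV B
  · rw [junkDepth_of_isTV (A := .box (.arrow A B)) hB,
      junkDepth_of_isTV (A := .arrow (.box A) (.box B)) hB]
  by_cases hA : IsTV A
  · simp [junkDepth, hA, hB, isTV_arrow_iff, isTV_box_iff, junkDepth_of_isTV hA]
  · simp [junkDepth, hA, hB, isTV_arrow_iff, isTV_box_iff, add_min]

lemma agree_of_tyEq (hlin : LocallyLinear acc) {s : Bool} {A B : Ty} (h : TyEq s A B) :
    Agree hwf ap A B := by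
  induction h with
  | refl _ A => exact .refl A
  | symm _ ih => exact ih.symm
  | trans _ _ ih₁ ih₂ => exact ih₁.trans ih₂
  | boxCongr _ ih => exact ih.box
  | arrowCongr _ _ ih₁ ih₂ => exact ih₁.arrow ih₂
  | arrowTop _ A => exact .arrow_tyTop A
  | fix _ A => exact .mu_unfoldMu A
  | uniq _ hC ih => exact ih.mu_of_openT hC
  | kl A B => exact .box_arrow hlin A B

end Soundness

/-- **Soundness of ≃** with respect to λA-frames. -/
theorem statement4
    (W : Type*) (hW : Nonempty W) (acc : W → W → Prop)
    (hwf : ConverselyWF acc) (hlin : LocallyLinear acc)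
    (V : Type*) (alg : LambdaAlgebra V) (Int : Interp W acc V alg.ap)
    (A B : Ty) (hA : WF A) (hB : WF B) (hAB : TyEq true A B)
    (η : ℕ → W → Set V) (hη : Hereditary acc η) (p : W) :
    Int.I A η p = Int.I B η p := by
  rw [interp_eq_sem hwf alg.ap Int p hA, interp_eq_sem hwf alg.ap Int p hB]
  exact (agree_of_tyEq hlin hAB).sem_eq (junkDepth_eq_top_of_wf hA) η hη p

end LambdaA
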